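/- arXiv:1010.3475 — 3 statements merged into one kernel-verified Lean document; each statement's English description precedes it below -/
import Mathlib

section
/- Let Z ⊂ ℝ² \ {0} be a set, and suppose there exists R > 0 such that for every A ∈ SL₂(ℝ), the set A·Z contains a vector of Euclidean length at most R. Then the Minkowski constant of Z satisfies μ(Z) ≤ (π/2)·R², i.e., every bounded convex origin-symmetric set C with area(C) ≥ 2πR² contains a point of Z. -/
/-!
John's theorem in the plane: among the ellipses `{x u + y w : x² + y² ≤ 1}` (of area
`π · cross u w`) inside the compact convex symmetric set `K = closure C`, one of maximal area
exists by compactness. If `K` had a point outside the `√2`-dilate of that ellipse then, in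
coordinates where the ellipse is the unit disk and the point is `(d, 0)` with `d² > 2`, the hull
of the disk and `±(d, 0)` would contain an ellipse of larger area. Hence
`area C < 2π · cross u w`, so `C` contains an ellipse of area `π R²`; a matrix of determinant one
maps it onto the disk of radius `R`, and that disk contains the image of a point of `Z`.
-/
open MeasureTheory

/-- Action of a `2 × 2` matrix on a vector of `ℝ²`. -/
def matAct (A : Matrix (Fin 2) (Fin 2) ℝ) (v : ℝ × ℝ) : ℝ × ℝ :=
  (A 0 0 * v.1 + A 0 1 * v.2, A 1 0 * v.1 + A 1 1 * v.2)

/-- The Minkowski constant `μ(Z)`: one fourth of the supremum of the areas of bounded,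
convex, origin-symmetric sets disjoint from `Z`. -/
noncomputable def minkowskiConst (Z : Set (ℝ × ℝ)) : ENNReal :=
  (1 / 4) * sSup (MeasureTheory.volume ''
    {C : Set (ℝ × ℝ) | Convex ℝ C ∧ Bornology.IsBounded C ∧ (∀ x ∈ C, -x ∈ C) ∧
      Disjoint C Z})

theorem interior_subset_of_measure_le {X : Type*} [TopologicalSpace X] [MeasurableSpace X]
    [OpensMeasurableSpace X] (μ : Measure X) [μ.IsOpenPosMeasure] {F S : Set X}
    (hF : IsClosed F) (hFS : F ⊆ S) (hS : μ S ≠ ⊤) (hle : μ S ≤ μ F) : interior S ⊆ F := by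
  intro x hx
  by_contra hxF
  have hU : IsOpen (interior S \ F) := isOpen_interior.sdiff hF
  have hsum : μ F + μ (interior S \ F) ≤ μ F + 0 := by
    rw [← measure_union Set.disjoint_sdiff_right hU.measurableSet, add_zero]
    exact (measure_mono (Set.union_subset hFS (Set.sdiff_subset.trans interior_subset))).trans hle
  exact (hU.measure_pos μ ⟨x, hx, hxF⟩).ne'
    (le_antisymm (ENNReal.le_of_add_le_add_left (ne_top_of_le_ne_top hS (measure_mono hFS)) hsum)
      bot_le)

theorem Convex.zero_mem_interior_of_measure_ne_zero {E : Type*} [NormedAddCommGroup E]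
    [NormedSpace ℝ E] [MeasurableSpace E] [BorelSpace E] [FiniteDimensional ℝ E]
    (μ : Measure E) [μ.IsAddHaarMeasure] {C : Set E} (hC : Convex ℝ C)
    (hsymm : ∀ x ∈ C, -x ∈ C) (hμ : μ C ≠ 0) : (0 : E) ∈ interior C := by
  obtain ⟨x, hx⟩ : (interior C).Nonempty := by
    by_contra hempty
    refine hμ (measure_mono_null (fun y hy => ?_) (hC.addHaar_frontier μ))
    rw [frontier, Set.not_nonempty_iff_eq_empty.1 hempty, Set.sdiff_empty]
    exact subset_closure hy
  have hnx : -x ∈ interior C :=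
    interior_maximal (by rintro _ ⟨y, hy, rfl⟩; exact hsymm y (interior_subset hy))
      ((Homeomorph.neg E).isOpenMap _ isOpen_interior) ⟨x, hx, rfl⟩
  simpa using hC.interior hx hnx (by norm_num : (0 : ℝ) ≤ 1 / 2)
    (by norm_num : (0 : ℝ) ≤ 1 / 2) (by norm_num)

namespace Plane

/-- `ℝ × ℝ` carries the sup norm, so the Euclidean disk is not a `Metric.closedBall`. -/
def disk (r : ℝ) : Set (ℝ × ℝ) := {v | v.1 ^ 2 + v.2 ^ 2 ≤ r ^ 2}

def cross (u w : ℝ × ℝ) : ℝ := u.1 * w.2 - u.2 * w.1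

def spanMap (u w : ℝ × ℝ) : ℝ × ℝ →ₗ[ℝ] ℝ × ℝ :=
  (LinearMap.toSpanSingleton ℝ _ u).coprod (LinearMap.toSpanSingleton ℝ _ w)

@[simp]
lemma spanMap_apply (u w q : ℝ × ℝ) : spanMap u w q = q.1 • u + q.2 • w := rfl

def spanEllipse (u w : ℝ × ℝ) : Set (ℝ × ℝ) := spanMap u w '' disk 1

lemma spanMap_spanMap (u w u' w' q : ℝ × ℝ) :
    spanMap u w (spanMap u' w' q) = spanMap (spanMap u w u') (spanMap u w w') q := by
  simp only [spanMap_apply, smul_add, smul_smul, Prod.ext_iff, Prod.fst_add, Prod.snd_add,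
    Prod.smul_fst, Prod.smul_snd, smul_eq_mul]
  constructor <;> ring

lemma image_spanEllipse (u w u' w' : ℝ × ℝ) :
    spanMap u w '' spanEllipse u' w' = spanEllipse (spanMap u w u') (spanMap u w w') := by
  simp only [spanEllipse, Set.image_image, spanMap_spanMap]

lemma cross_spanMap (u w u' w' : ℝ × ℝ) :
    cross (spanMap u w u') (spanMap u w w') = cross u w * cross u' w' := by
  simp only [cross, spanMap_apply, Prod.fst_add, Prod.snd_add, Prod.smul_fst, Prod.smul_snd,
    smul_eq_mul]
  ring

lemma spanMap_smul_smul (c : ℝ) (u w q : ℝ × ℝ) :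
    spanMap (c • u) (c • w) q = c • spanMap u w q := by
  simp only [spanMap_apply, smul_add, smul_comm c]

lemma cross_smul_smul (c : ℝ) (u w : ℝ × ℝ) : cross (c • u) (c • w) = c ^ 2 * cross u w := by
  simp only [cross, Prod.smul_fst, Prod.smul_snd, smul_eq_mul]
  ring

lemma det_spanMap (u w : ℝ × ℝ) : LinearMap.det (spanMap u w) = cross u w := by
  rw [← LinearMap.det_toMatrix (Module.Basis.finTwoProd ℝ), Matrix.det_fin_two]
  simp only [LinearMap.toMatrix_apply, Module.Basis.finTwoProd_zero, Module.Basis.finTwoProd_one,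
    Module.Basis.coe_finTwoProd_repr, spanMap_apply, one_smul, zero_smul, add_zero, zero_add,
    Matrix.cons_val_zero, Matrix.cons_val_one, Matrix.cons_val_fin_one, cross]
  ring

lemma volume_disk {r : ℝ} (hr : 0 ≤ r) : volume (disk r) = ENNReal.ofReal (Real.pi * r ^ 2) := by
  have hpre : Complex.measurableEquivRealProd ⁻¹' disk r = Metric.closedBall (0 : ℂ) r := by
    ext z
    simp only [Set.mem_preimage, Complex.measurableEquivRealProd_apply, disk, Set.mem_ofPred_eq,
      mem_closedBall_zero_iff, Complex.norm_def, Complex.normSq_apply]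
    rw [Real.sqrt_le_left hr]
    ring_nf
  have hmeas : MeasurableSet (disk r) := measurableSet_le (by fun_prop) (by fun_prop)
  rw [← Complex.volume_preserving_equiv_real_prod.measure_preimage hmeas.nullMeasurableSet,
    hpre, Complex.volume_closedBall, ← ENNReal.ofReal_pow hr, ← ENNReal.ofReal_coe_nnreal,
    NNReal.coe_real_pi, ← ENNReal.ofReal_mul (sq_nonneg r), mul_comm]


section Geometry

variable {K : Set (ℝ × ℝ)} {d : ℝ}

/-- `(x, y)` is the convex combination of `(d, 0)` and the point `(1 / d, y (d² - 1) / (d (d - x)))`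
of the unit disk, which lies on the chord of contact of the tangents from `(d, 0)`. -/
lemma mk_mem_of_mem_tangentCone (hK : Convex ℝ K) (hdisk : disk 1 ⊆ K) (hd : (d, 0) ∈ K)
    (hd1 : 1 < d) {x y : ℝ} (hx : 1 < d * x) (hxd : x < d)
    (hy : y ^ 2 * (d ^ 2 - 1) ≤ (d - x) ^ 2) : (x, y) ∈ K := by
  have hΔ : 0 < d ^ 2 - 1 := by nlinarith
  have hdx : 0 < d - x := by linarith
  have hw : (1 / d, y * (d ^ 2 - 1) / (d * (d - x))) ∈ K := by
    apply hdisk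
    simp only [disk, Set.mem_ofPred_eq]
    rw [div_pow, div_pow, div_add_div _ _ (by positivity) (by positivity),
      div_le_iff₀ (by positivity)]
    nlinarith [mul_le_mul_of_nonneg_left hy hΔ.le]
  have hcomb := hK hd hw (a := (d * x - 1) / (d ^ 2 - 1)) (b := d * (d - x) / (d ^ 2 - 1))
    (div_nonneg (by linarith) hΔ.le) (by positivity) (by field_simp; ring)
  convert hcomb using 1
  ext <;> simp only [Prod.smul_mk, Prod.mk_add_mk, smul_eq_mul] <;> field_simp <;> ring

lemma mk_mem_of_two_mul_sq_add_le (hK : Convex ℝ K) (hsymm : ∀ v ∈ K, -v ∈ K)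
    (hdisk : disk 1 ⊆ K) (hd : (d, 0) ∈ K) (hd0 : 0 < d) (hd2 : 2 < d ^ 2) {x y : ℝ}
    (hxy : 2 * x ^ 2 + 2 * y ^ 2 * (d ^ 2 - 1) ≤ d ^ 2) : (x, y) ∈ K := by
  wlog hx : 0 ≤ x generalizing x y
  · simpa using hsymm _ (this (x := -x) (y := -y) (by simpa using hxy) (by linarith))
  have hy : 0 ≤ y ^ 2 * (d ^ 2 - 1) := mul_nonneg (sq_nonneg y) (by linarith)
  rcases le_or_gt (d * x) 1 with hdx | hdx
  · apply hdisk
    have hx2 : 2 * x ^ 2 ≤ 1 := by nlinarith [mul_le_mul hdx hdx (by positivity) zero_le_one]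
    simp only [disk, Set.mem_ofPred_eq]
    nlinarith [mul_le_mul_of_nonneg_left hx2 (by linarith : (0 : ℝ) ≤ d ^ 2 - 2)]
  · refine mk_mem_of_mem_tangentCone hK hdisk hd (by nlinarith) hdx ?_ ?_
    · nlinarith
    · nlinarith [sq_nonneg (d - 2 * x)]

/-- The ellipse with semi-axes `a = d / √2` and `b = d / √(2 (d² - 1))` lies in the hull of the
unit disk and `±(d, 0)`, and `4 (a b)² (d² - 1) = d⁴ > 4 (d² - 1)` because `d² ≠ 2`. -/
lemma exists_spanEllipse_one_lt_cross_of_mk_mem (hK : Convex ℝ K) (hsymm : ∀ v ∈ K, -v ∈ K)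
    (hdisk : disk 1 ⊆ K) (hd : (d, 0) ∈ K) (hd0 : 0 < d) (hd2 : 2 < d ^ 2) :
    ∃ u w, spanEllipse u w ⊆ K ∧ 1 < cross u w := by
  have hΔ : 0 < d ^ 2 - 1 := by linarith
  set a := d / Real.sqrt 2
  set b := d / Real.sqrt (2 * (d ^ 2 - 1))
  have ha : 2 * a ^ 2 = d ^ 2 := by
    rw [div_pow, Real.sq_sqrt zero_le_two]; field_simp
  have hb : 2 * b ^ 2 * (d ^ 2 - 1) = d ^ 2 := by
    rw [div_pow, Real.sq_sqrt (by positivity)]; field_simp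
  refine ⟨(a, 0), (0, b), ?_, ?_⟩
  · rintro _ ⟨q, hq, rfl⟩
    simp only [disk, Set.mem_ofPred_eq, one_pow] at hq
    have hmk : spanMap (a, 0) (0, b) q = (q.1 * a, q.2 * b) := by simp
    rw [hmk]
    refine mk_mem_of_two_mul_sq_add_le hK hsymm hdisk hd hd0 hd2 ?_
    calc 2 * (q.1 * a) ^ 2 + 2 * (q.2 * b) ^ 2 * (d ^ 2 - 1)
        = d ^ 2 * (q.1 ^ 2 + q.2 ^ 2) := by linear_combination q.1 ^ 2 * ha + q.2 ^ 2 * hb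
      _ ≤ d ^ 2 := by nlinarith
  · have hab : 1 < (a * b) ^ 2 := by
      have h4 : 4 * (a * b) ^ 2 * (d ^ 2 - 1) = d ^ 4 := by
        linear_combination (2 * b ^ 2 * (d ^ 2 - 1)) * ha + d ^ 2 * hb
      nlinarith [sq_pos_of_pos (by linarith : (0 : ℝ) < d ^ 2 - 2)]
    have : 0 < a * b := by positivity
    simpa [cross] using (one_lt_sq_iff₀ this.le).1 hab

lemma exists_spanEllipse_one_lt_cross_of_two_lt (hK : Convex ℝ K) (hsymm : ∀ v ∈ K, -v ∈ K)
    (hdisk : disk 1 ⊆ K) {q : ℝ × ℝ} (hq : q ∈ K) (hq2 : 2 < q.1 ^ 2 + q.2 ^ 2) :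
    ∃ u w, spanEllipse u w ⊆ K ∧ 1 < cross u w := by
  set d := Real.sqrt (q.1 ^ 2 + q.2 ^ 2)
  have hd0 : 0 < d := Real.sqrt_pos.2 (by linarith)
  have hd2 : d ^ 2 = q.1 ^ 2 + q.2 ^ 2 := Real.sq_sqrt (by positivity)
  set e := d⁻¹ • q
  have he : e.1 ^ 2 + e.2 ^ 2 = 1 := by
    simp only [e, Prod.smul_fst, Prod.smul_snd, smul_eq_mul]
    field_simp
    linarith
  set Φ := spanMap e (-e.2, e.1)
  have hΦdisk : disk 1 ⊆ Φ ⁻¹' K := by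
    intro p hp
    apply hdisk
    simp only [disk, Set.mem_ofPred_eq, Φ, spanMap_apply, Prod.fst_add, Prod.snd_add,
      Prod.smul_fst, Prod.smul_snd, smul_eq_mul] at hp ⊢
    linear_combination hp + (p.1 ^ 2 + p.2 ^ 2) * he
  have hΦd : Φ (d, 0) = q := by
    simp only [Φ, spanMap_apply, zero_smul, add_zero, e, smul_smul, mul_inv_cancel₀ hd0.ne',
      one_smul]
  obtain ⟨u, w, hsub, hcross⟩ := exists_spanEllipse_one_lt_cross_of_mk_mem
    (hK.linear_preimage Φ) (fun v hv => by rw [Set.mem_preimage, map_neg]; exact hsymm _ hv)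
    hΦdisk (by rwa [Set.mem_preimage, hΦd]) hd0 (by linarith)
  refine ⟨Φ u, Φ w, ?_, ?_⟩
  · rw [← image_spanEllipse]
    exact Set.image_subset_iff.2 hsub
  · rwa [cross_spanMap, show cross e (-e.2, e.1) = 1 by simp only [cross]; linarith, one_mul]

end Geometry

section MaximalEllipse

variable {K : Set (ℝ × ℝ)} {u w : ℝ × ℝ}

def IsMaxInscribed (K : Set (ℝ × ℝ)) (u w : ℝ × ℝ) : Prop :=
  spanEllipse u w ⊆ K ∧ ∀ u' w', spanEllipse u' w' ⊆ K → cross u' w' ≤ cross u w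

lemma exists_isMaxInscribed (hK : IsCompact K) {ε : ℝ} (hε : 0 < ε) (hdisk : disk ε ⊆ K) :
    ∃ u w, IsMaxInscribed K u w ∧ 0 < cross u w := by
  set H := {p : (ℝ × ℝ) × (ℝ × ℝ) | spanEllipse p.1 p.2 ⊆ K}
  have hHK : H ⊆ K ×ˢ K := fun p hp =>
    ⟨hp ⟨(1, 0), by simp [disk], by simp⟩, hp ⟨(0, 1), by simp [disk], by simp⟩⟩
  have hHclosed : IsClosed H := by
    have : H = ⋂ q ∈ disk 1, (fun p : (ℝ × ℝ) × (ℝ × ℝ) => spanMap p.1 p.2 q) ⁻¹' K := by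
      ext p
      simp only [H, Set.mem_ofPred_eq, spanEllipse, Set.image_subset_iff, Set.mem_iInter]
      rfl
    rw [this]
    exact isClosed_biInter fun q _ => hK.isClosed.preimage (by simp only [spanMap_apply]; fun_prop)
  have hε' : ((ε, 0), (0, ε)) ∈ H := by
    rintro _ ⟨q, hq, rfl⟩
    apply hdisk
    simp only [disk, Set.mem_ofPred_eq, one_pow, spanMap_apply, Prod.fst_add, Prod.snd_add,
      Prod.smul_fst, Prod.smul_snd, smul_eq_mul, mul_zero, add_zero, zero_add] at hq ⊢
    nlinarith [sq_nonneg ε]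
  have hcont : Continuous fun p : (ℝ × ℝ) × (ℝ × ℝ) => cross p.1 p.2 := by
    unfold cross
    fun_prop
  obtain ⟨p, hpH, hpmax⟩ := ((hK.prod hK).of_isClosed_subset hHclosed hHK).exists_isMaxOn
    ⟨_, hε'⟩ hcont.continuousOn
  refine ⟨p.1, p.2, ⟨hpH, fun u' w' h => hpmax (a := (u', w')) h⟩, ?_⟩
  have := hpmax hε'
  simp only [Set.mem_ofPred_eq, cross] at this ⊢
  nlinarith [sq_pos_of_pos hε]

lemma IsMaxInscribed.preimage_subset_disk (hK : Convex ℝ K) (hsymm : ∀ v ∈ K, -v ∈ K)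
    (h : IsMaxInscribed K u w) (hc : 0 < cross u w) :
    spanMap u w ⁻¹' K ⊆ disk (Real.sqrt 2) := by
  intro q hq
  by_contra hq2
  simp only [disk, Set.mem_ofPred_eq, Real.sq_sqrt zero_le_two, not_le] at hq2
  obtain ⟨u', w', hsub, hcross⟩ := exists_spanEllipse_one_lt_cross_of_two_lt
    (hK.linear_preimage _) (fun v hv => by rw [Set.mem_preimage, map_neg]; exact hsymm _ hv)
    (Set.image_subset_iff.1 h.1) hq hq2
  have := h.2 _ _ (by rw [← image_spanEllipse]; exact Set.image_subset_iff.2 hsub)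
  rw [cross_spanMap] at this
  nlinarith

/-- Equality would force the closed set `spanMap u w ⁻¹' K ⊆ disk √2` to contain the open disk of
radius `√2`, hence the `5/4`-dilate of the maximal ellipse. -/
lemma IsMaxInscribed.volume_lt (hKc : IsClosed K) (hK : Convex ℝ K) (hsymm : ∀ v ∈ K, -v ∈ K)
    (h : IsMaxInscribed K u w) (hc : 0 < cross u w) :
    volume K < ENNReal.ofReal (2 * Real.pi * cross u w) := by
  set Φ := spanMap u w
  have hvol : volume (Φ ⁻¹' K) = ENNReal.ofReal (cross u w)⁻¹ * volume K := by
    rw [Measure.addHaar_preimage_linearMap volume (by rw [det_spanMap]; exact hc.ne'),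
      det_spanMap, abs_of_pos (inv_pos.2 hc)]
  have hdisk2 : volume (disk (Real.sqrt 2)) = ENNReal.ofReal (2 * Real.pi) := by
    rw [volume_disk (Real.sqrt_nonneg 2), Real.sq_sqrt zero_le_two, mul_comm]
  have hsub := h.preimage_subset_disk hK hsymm hc
  have hlt : volume (Φ ⁻¹' K) < volume (disk (Real.sqrt 2)) := by
    refine (measure_mono hsub).lt_of_ne fun heq => ?_
    have hint := interior_subset_of_measure_le volume
      (hKc.preimage Φ.continuous_of_finiteDimensional) hsub
      (by rw [hdisk2]; exact ENNReal.ofReal_ne_top) heq.ge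
    have hopen : {v : ℝ × ℝ | v.1 ^ 2 + v.2 ^ 2 < 2} ⊆ interior (disk (Real.sqrt 2)) :=
      interior_maximal (fun v hv => by
          simp only [disk, Set.mem_ofPred_eq, Real.sq_sqrt zero_le_two] at hv ⊢; exact hv.le)
        (isOpen_lt (by fun_prop) continuous_const)
    have h54 := h.2 ((5 / 4 : ℝ) • u) ((5 / 4 : ℝ) • w) (by
      rintro _ ⟨q, hq, rfl⟩
      rw [spanMap_smul_smul, ← map_smul]
      refine hint (hopen ?_)
      simp only [disk, Set.mem_ofPred_eq, one_pow] at hq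
      simp only [Set.mem_ofPred_eq, Prod.smul_fst, Prod.smul_snd, smul_eq_mul]
      nlinarith)
    rw [cross_smul_smul] at h54
    nlinarith
  calc volume K = ENNReal.ofReal (cross u w) * volume (Φ ⁻¹' K) := by
        rw [hvol, ← mul_assoc, ← ENNReal.ofReal_mul hc.le, mul_inv_cancel₀ hc.ne',
          ENNReal.ofReal_one, one_mul]
    _ < ENNReal.ofReal (cross u w) * ENNReal.ofReal (2 * Real.pi) :=
        ENNReal.mul_lt_mul_right (ENNReal.ofReal_pos.2 hc).ne' ENNReal.ofReal_ne_top
          (hlt.trans_eq hdisk2)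
    _ = ENNReal.ofReal (2 * Real.pi * cross u w) := by
        rw [← ENNReal.ofReal_mul hc.le, mul_comm]

end MaximalEllipse

lemma disk_subset_ball {r ε : ℝ} (hr : 0 ≤ r) (hrε : r < ε) :
    disk r ⊆ Metric.ball 0 ε := by
  intro v hv
  simp only [disk, Set.mem_ofPred_eq] at hv
  rw [mem_ball_zero_iff, Prod.norm_def, Real.norm_eq_abs, Real.norm_eq_abs]
  exact max_lt (abs_lt_of_sq_lt_sq (by nlinarith) (hr.trans_lt hrε).le)
    (abs_lt_of_sq_lt_sq (by nlinarith) (hr.trans_lt hrε).le)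

theorem exists_spanEllipse_subset_of_le_volume {C : Set (ℝ × ℝ)} (hC : Convex ℝ C)
    (hCb : Bornology.IsBounded C) (hsymm : ∀ x ∈ C, -x ∈ C) {R : ℝ} (hR : 0 < R)
    (hvol : ENNReal.ofReal (2 * Real.pi * R ^ 2) ≤ volume C) :
    ∃ u w, cross u w = R ^ 2 ∧ spanEllipse u w ⊆ C := by
  have h0 : (0 : ℝ × ℝ) ∈ interior C := hC.zero_mem_interior_of_measure_ne_zero volume hsymm
    ((ENNReal.ofReal_pos.2 (by positivity)).trans_le hvol).ne'
  obtain ⟨ε, hε, hball⟩ := Metric.mem_nhds_iff.1 (mem_interior_iff_mem_nhds.1 h0)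
  have hKsymm : ∀ x ∈ closure C, -x ∈ closure C := fun x hx =>
    map_mem_closure continuous_neg hx fun y hy => hsymm y hy
  obtain ⟨u, w, hmax, hc⟩ := exists_isMaxInscribed hCb.isCompact_closure (half_pos hε)
    (((disk_subset_ball (half_pos hε).le (half_lt_self hε)).trans
      hball).trans subset_closure)
  have hlt := (hvol.trans (measure_mono subset_closure)).trans_lt
    (hmax.volume_lt isClosed_closure hC.closure hKsymm hc)
  rw [ENNReal.ofReal_lt_ofReal_iff (by positivity)] at hlt
  have hR2 : R ^ 2 < cross u w := by nlinarith [Real.pi_pos]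
  set ρ := R / Real.sqrt (cross u w)
  have hsqrt : 0 < Real.sqrt (cross u w) := Real.sqrt_pos.2 hc
  have hρ : 0 < ρ := div_pos hR hsqrt
  have hρ1 : ρ < 1 := (div_lt_one hsqrt).2 ((Real.lt_sqrt hR.le).2 hR2)
  refine ⟨ρ • u, ρ • w, ?_, ?_⟩
  · rw [cross_smul_smul, div_pow, Real.sq_sqrt hc.le]
    field_simp
  · rintro _ ⟨q, hq, rfl⟩
    rw [spanMap_smul_smul]
    simpa using interior_subset (hC.combo_interior_closure_mem_interior h0
      (hmax.1 ⟨q, hq, rfl⟩) (sub_pos.2 hρ1) hρ.le (sub_add_cancel 1 ρ))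

theorem exists_det_eq_one_preimage_disk_subset {C : Set (ℝ × ℝ)} {u w : ℝ × ℝ} {R : ℝ}
    (hR : 0 < R) (hc : cross u w = R ^ 2) (hsub : spanEllipse u w ⊆ C) :
    ∃ A : Matrix (Fin 2) (Fin 2) ℝ, A.det = 1 ∧ matAct A ⁻¹' disk R ⊆ C := by
  simp only [cross] at hc
  refine ⟨!![w.2 / R, -w.1 / R; -u.2 / R, u.1 / R], ?_, fun z hz => ?_⟩
  · rw [Matrix.det_fin_two_of]
    field_simp
    linear_combination hc
  · set A := !![w.2 / R, -w.1 / R; -u.2 / R, u.1 / R]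
    have hinv : spanMap u w (R⁻¹ • matAct A z) = z := by
      simp only [A, spanMap_apply, matAct, Matrix.of_apply, Matrix.cons_val', Matrix.cons_val_zero,
        Matrix.cons_val_one, Matrix.empty_val', Matrix.cons_val_fin_one, Prod.smul_mk,
        smul_eq_mul, Prod.ext_iff, Prod.fst_add, Prod.snd_add, Prod.smul_fst, Prod.smul_snd]
      constructor
      · field_simp
        linear_combination z.1 * hc
      · field_simp
        linear_combination z.2 * hc
    rw [← hinv]
    refine hsub ⟨_, ?_, rfl⟩
    simp only [disk, Set.mem_preimage, Set.mem_ofPred_eq, Prod.smul_fst, Prod.smul_snd,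
      smul_eq_mul] at hz ⊢
    rw [mul_pow, mul_pow, ← mul_add, inv_pow, one_pow, inv_mul_le_one₀ (by positivity)]
    exact hz

end Plane

theorem minkowskiConst_le_of_forall_meets {Z : Set (ℝ × ℝ)} {a : ENNReal}
    (h : ∀ C : Set (ℝ × ℝ), Convex ℝ C → Bornology.IsBounded C → (∀ x ∈ C, -x ∈ C) →
      4 * a ≤ volume C → ∃ z ∈ Z, z ∈ C) :
    minkowskiConst Z ≤ a := by
  have hsup : sSup (volume '' {C : Set (ℝ × ℝ) | Convex ℝ C ∧ Bornology.IsBounded C ∧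
      (∀ x ∈ C, -x ∈ C) ∧ Disjoint C Z}) ≤ 4 * a := by
    refine sSup_le ?_
    rintro _ ⟨C, ⟨hC, hCb, hsymm, hdisj⟩, rfl⟩
    by_contra hlt
    obtain ⟨z, hz, hzC⟩ := h C hC hCb hsymm (not_le.1 hlt).le
    exact Set.disjoint_left.1 hdisj hzC hz
  calc minkowskiConst Z ≤ 1 / 4 * (4 * a) := mul_le_mul_right hsup _
    _ = a := by
      rw [← mul_assoc, one_div, ENNReal.inv_mul_cancel (by norm_num) (by norm_num), one_mul]

theorem stmt8_general (Z : Set (ℝ × ℝ)) (R : ℝ) (hR : 0 < R)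
    (hshort : ∀ A : Matrix.SpecialLinearGroup (Fin 2) ℝ,
      ∃ z ∈ Z, Real.sqrt ((matAct (A : Matrix (Fin 2) (Fin 2) ℝ) z).1 ^ 2 +
        (matAct (A : Matrix (Fin 2) (Fin 2) ℝ) z).2 ^ 2) ≤ R) :
    minkowskiConst Z ≤ ENNReal.ofReal (Real.pi / 2 * R ^ 2) ∧
    ∀ C : Set (ℝ × ℝ), Convex ℝ C → Bornology.IsBounded C → (∀ x ∈ C, -x ∈ C) →
      ENNReal.ofReal (2 * Real.pi * R ^ 2) ≤ MeasureTheory.volume C →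
      ∃ z ∈ Z, z ∈ C := by
  have hmeets : ∀ C : Set (ℝ × ℝ), Convex ℝ C → Bornology.IsBounded C → (∀ x ∈ C, -x ∈ C) →
      ENNReal.ofReal (2 * Real.pi * R ^ 2) ≤ volume C → ∃ z ∈ Z, z ∈ C := by
    intro C hC hCb hsymm hvol
    obtain ⟨u, w, hc, hsub⟩ := Plane.exists_spanEllipse_subset_of_le_volume hC hCb hsymm hR hvol
    obtain ⟨A, hA, hpre⟩ := Plane.exists_det_eq_one_preimage_disk_subset hR hc hsub
    obtain ⟨z, hz, hlen⟩ := hshort ⟨A, hA⟩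
    exact ⟨z, hz, hpre ((Real.sqrt_le_left hR.le).1 hlen)⟩
  refine ⟨minkowskiConst_le_of_forall_meets fun C hC hCb hsymm hvol => hmeets C hC hCb hsymm ?_,
    hmeets⟩
  rwa [← ENNReal.ofReal_ofNat 4, ← ENNReal.ofReal_mul zero_le_four, ← mul_assoc,
    show (4 : ℝ) * (Real.pi / 2) = 2 * Real.pi by ring] at hvol

/-- If `Z ⊂ ℝ² \ {0}` is such that for some `R > 0` every `SL₂(ℝ)`-image of `Z` contains
a vector of Euclidean length at most `R`, then `μ(Z) ≤ (π/2)R²`; indeed every bounded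
convex origin-symmetric `C` of area at least `2πR²` meets `Z`. -/
theorem stmt8 (Z : Set (ℝ × ℝ)) (hZ0 : (0 : ℝ × ℝ) ∉ Z) (R : ℝ) (hR : 0 < R)
    (hshort : ∀ A : Matrix.SpecialLinearGroup (Fin 2) ℝ,
      ∃ z ∈ Z, Real.sqrt ((matAct (A : Matrix (Fin 2) (Fin 2) ℝ) z).1 ^ 2 +
        (matAct (A : Matrix (Fin 2) (Fin 2) ℝ) z).2 ^ 2) ≤ R) :
    minkowskiConst Z ≤ ENNReal.ofReal (Real.pi / 2 * R ^ 2) ∧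
    ∀ C : Set (ℝ × ℝ), Convex ℝ C → Bornology.IsBounded C → (∀ x ∈ C, -x ∈ C) →
      ENNReal.ofReal (2 * Real.pi * R ^ 2) ≤ MeasureTheory.volume C →
      ∃ z ∈ Z, z ∈ C :=
  stmt8_general Z R hR hshort
end

section
/- Let K be a totally real number field of degree D with real embeddings σ₁ = id, σ₂, ..., σ_D. Let c > 0 and m ∈ ℕ, m ≥ 1. Suppose p, q ∈ K with q > 0 are such that mp, mq are algebraic integers and |p| ≥ c|σᵢ(p)|, |q| ≥ c|σᵢ(q)| for all i. Then the naive height of p/q satisfies H(p/q) ≤ c₂ · max{|p|, q}^D for a constant c₂ depending only on c, m, and D (not on p, q). -/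
/-!
Write `p / q = (m p) / (m q)` with `m p, m q` algebraic integers. The norm
`F(X) = ∏_τ (τ(m q) X - τ(m p))` of `m q X - m p` has integer coefficients and vanishes at
`p / q`, so the primitive minimal polynomial `g` of `p / q` divides it in `ℤ[X]`. The cofactor has
Mahler measure at least `1`, hence (Mignotte) every coefficient of `g` is at most
`2 ^ deg F · M(F)`, and `M(F) = ∏_τ max(|τ(m q)|, |τ(m p)|) ≤ (m / c · max(|p|, q)) ^ D`
by the dominance hypotheses, all embeddings being real.
-/

open Polynomial

/-- The primitive integer minimal polynomial of an algebraic number. -/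
noncomputable def intMinpoly (γ : ℂ) : Polynomial ℤ :=
  (IsLocalization.integerNormalization (nonZeroDivisors ℤ) (minpoly ℚ γ)).primPart

/-- The naive height of an algebraic number: the maximal absolute value of the
coefficients of its minimal polynomial over `ℤ`. -/
noncomputable def naiveHeight (γ : ℂ) : ℝ :=
  ((intMinpoly γ).support.sup fun i => ((intMinpoly γ).coeff i).natAbs : ℕ)

open NumberField

lemma naiveHeight_le_of_natAbs_coeff_le {γ : ℂ} {B : ℝ} (hB : 0 ≤ B)
    (h : ∀ i, ((intMinpoly γ).coeff i).natAbs ≤ B) : naiveHeight γ ≤ B :=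
  (Nat.cast_le.mpr (Finset.sup_le fun i _ => Nat.le_floor (h i))).trans (Nat.floor_le hB)

lemma map_intMinpoly_dvd_minpoly (γ : ℂ) :
    (intMinpoly γ).map (algebraMap ℤ ℚ) ∣ minpoly ℚ γ := by
  obtain ⟨b, hb, hPb⟩ := IsLocalization.integerNormalization_spec (nonZeroDivisors ℤ)
    (minpoly ℚ γ)
  have hb0 : (b : ℚ) ≠ 0 := by exact_mod_cast nonZeroDivisors.ne_zero hb
  rw [← dvd_C_mul hb0, ← smul_eq_C_mul, Int.cast_smul_eq_zsmul ℚ, ← hPb]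
  exact Polynomial.map_dvd _ (primPart_dvd _)

lemma intMinpoly_dvd_of_aeval_eq_zero {γ : ℂ} {F : ℤ[X]} (hF : aeval γ F = 0) :
    intMinpoly γ ∣ F :=
  (isPrimitive_primPart _).dvd_of_fraction_map_dvd_fraction_map
    ((map_intMinpoly_dvd_minpoly γ).trans (minpoly.dvd ℚ γ (by rwa [aeval_map_algebraMap])))

theorem naiveHeight_le_two_pow_natDegree_mul_mahlerMeasure {γ : ℂ} {F : ℤ[X]} (hF : F ≠ 0)
    (hroot : aeval γ F = 0) :
    naiveHeight γ ≤ 2 ^ F.natDegree * (F.map (Int.castRingHom ℂ)).mahlerMeasure := by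
  obtain ⟨h, rfl⟩ := intMinpoly_dvd_of_aeval_eq_zero hroot
  set g := intMinpoly γ
  refine naiveHeight_le_of_natAbs_coeff_le
    (mul_nonneg (by positivity) (mahlerMeasure_nonneg _)) fun i => ?_
  have hdeg : (g.map (Int.castRingHom ℂ)).natDegree ≤ (g * h).natDegree :=
    natDegree_map_le.trans (natDegree_le_of_dvd (dvd_mul_right g h) hF)
  calc ((g.coeff i).natAbs : ℝ) = ‖(g.map (Int.castRingHom ℂ)).coeff i‖ := by simp
    _ ≤ (g.map (Int.castRingHom ℂ)).natDegree.choose i *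
          (g.map (Int.castRingHom ℂ) * h.map (Int.castRingHom ℂ)).mahlerMeasure :=
        norm_coeff_le_choose_mul_mahlerMeasure_of_one_le_mahlerMeasure i _ _
          (one_le_mahlerMeasure_of_ne_zero (right_ne_zero_of_mul hF))
    _ ≤ 2 ^ (g * h).natDegree * ((g * h).map (Int.castRingHom ℂ)).mahlerMeasure := by
        rw [Polynomial.map_mul]
        refine mul_le_mul_of_nonneg_right ?_ (mahlerMeasure_nonneg _)
        exact_mod_cast (Nat.choose_le_two_pow _ i).trans (Nat.pow_le_pow_right two_pos hdeg)

namespace Polynomial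

theorem mahlerMeasure_prod_C_mul_X_sub_C {ι : Type*} (s : Finset ι) (a b : ι → ℂ)
    (ha : ∀ i ∈ s, a i ≠ 0) :
    (∏ i ∈ s, (C (a i) * X - C (b i))).mahlerMeasure = ∏ i ∈ s, max ‖a i‖ ‖b i‖ := by
  rw [Finset.prod_eq_multiset_prod, prod_mahlerMeasure_eq_mahlerMeasure_prod, Multiset.map_map,
    Finset.prod_eq_multiset_prod]
  refine congrArg _ (Multiset.map_congr rfl fun i hi => ?_)
  rw [Function.comp_apply, sub_eq_add_neg, ← C_neg, mahlerMeasure_C_mul_X_add_C (ha i hi),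
    norm_neg]

lemma natDegree_prod_C_mul_X_sub_C_le {R ι : Type*} [CommRing R] (s : Finset ι) (a b : ι → R) :
    (∏ i ∈ s, (C (a i) * X - C (b i))).natDegree ≤ s.card := by
  calc _ ≤ ∑ i ∈ s, (C (a i) * X - C (b i)).natDegree := natDegree_prod_le _ _
    _ ≤ s.card • 1 := Finset.sum_le_card_nsmul _ _ _ fun i _ => by compute_degree
    _ = s.card := by rw [smul_eq_mul, mul_one]

end Polynomial

namespace NumberField

/-- `F = det (X [B] - [Γ])` for the matrices of multiplication in an integral basis: at `X = n`
it is the norm of `n B - Γ`. -/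
theorem exists_map_eq_prod_C_mul_X_sub_C (K : Type*) [Field K] [NumberField K] (B Γ : 𝓞 K) :
    ∃ F : ℤ[X], F.map (Int.castRingHom ℂ) = ∏ τ : K →ₐ[ℚ] ℂ, (C (τ B) * X - C (τ Γ)) := by
  let b := RingOfIntegers.basis K
  let F : ℤ[X] := (Matrix.of fun i j =>
    C (Algebra.leftMulMatrix b B i j) * X - C (Algebra.leftMulMatrix b Γ i j)).det
  have hF : ∀ n : ℤ, F.eval n = Algebra.norm ℤ (n • B - Γ) := fun n => by
    rw [← coe_evalRingHom, RingHom.map_det, Algebra.norm_eq_matrix_det b]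
    congr 1
    ext i j
    simp [RingHom.mapMatrix_apply, -zsmul_eq_mul, mul_comm]
  refine ⟨F, eq_of_infinite_eval_eq _ _ <| Set.infinite_of_injective_forall_mem
    (f := ((↑) : ℤ → ℂ)) Int.cast_injective fun n => ?_⟩
  calc eval (n : ℂ) (F.map (Int.castRingHom ℂ))
      = algebraMap ℚ ℂ (Algebra.norm ℚ ((n • B - Γ : 𝓞 K) : K)) := by
        rw [eval_intCast_map, hF, ← Algebra.coe_norm_int]; simp
    _ = _ := by
        rw [Algebra.norm_eq_prod_embeddings ℚ ℂ, eval_prod]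
        refine Finset.prod_congr rfl fun τ _ => ?_
        simp only [zsmul_eq_mul, map_sub, map_mul, map_intCast, eval_sub, eval_mul, eval_C, eval_X,
          sub_left_inj]
        ring

theorem ComplexEmbedding.IsReal.norm_le_div {K : Type*} [Field K] {τ : K →+* ℂ}
    (hτ : ComplexEmbedding.IsReal τ) {c r : ℝ} (hc : 0 < c) {x : K}
    (hx : ∀ σ : K →+* ℝ, c * |σ x| ≤ r) : ‖τ x‖ ≤ r / c := by
  rw [← hτ.coe_embedding_apply, Complex.norm_real, Real.norm_eq_abs, le_div_iff₀' hc]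
  exact hx _

theorem prod_max_norm_le_div_pow_finrank {K : Type*} [Field K] [NumberField K]
    (htotreal : ∀ φ : K →+* ℂ, ComplexEmbedding.IsReal φ) {c r : ℝ} (hc : 0 < c) {x y : K}
    (hx : ∀ σ : K →+* ℝ, c * |σ x| ≤ r) (hy : ∀ σ : K →+* ℝ, c * |σ y| ≤ r) :
    ∏ τ : K →ₐ[ℚ] ℂ, max ‖τ y‖ ‖τ x‖ ≤ (r / c) ^ Module.finrank ℚ K := by
  rw [← AlgHom.card ℚ K ℂ, ← Finset.card_univ, ← Finset.prod_const]
  exact Finset.prod_le_prod (fun τ _ => by positivity) fun τ _ =>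
    max_le ((htotreal τ).norm_le_div hc hy) ((htotreal τ).norm_le_div hc hx)

end NumberField

theorem naiveHeight_div_le_two_pow_finrank_mul_prod {K : Type*} [Field K] [NumberField K]
    (τ₀ : K →+* ℂ) {x y : K} (hx : IsIntegral ℤ x) (hy : IsIntegral ℤ y) (hy0 : y ≠ 0) :
    naiveHeight (τ₀ (x / y)) ≤
      2 ^ Module.finrank ℚ K * ∏ τ : K →ₐ[ℚ] ℂ, max ‖τ y‖ ‖τ x‖ := by
  obtain ⟨F, hF⟩ : ∃ F : ℤ[X], F.map (Int.castRingHom ℂ) =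
      ∏ τ : K →ₐ[ℚ] ℂ, (C (τ y) * X - C (τ x)) :=
    exists_map_eq_prod_C_mul_X_sub_C K ⟨y, hy⟩ ⟨x, hx⟩
  have hτy : ∀ τ : K →ₐ[ℚ] ℂ, τ y ≠ 0 := fun τ => (map_ne_zero τ).mpr hy0
  have hmahler : (F.map (Int.castRingHom ℂ)).mahlerMeasure =
      ∏ τ : K →ₐ[ℚ] ℂ, max ‖τ y‖ ‖τ x‖ := by
    rw [hF, mahlerMeasure_prod_C_mul_X_sub_C _ _ _ fun τ _ => hτy τ]
  have hF0 : F ≠ 0 := by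
    rintro rfl
    rw [Polynomial.map_zero, mahlerMeasure_zero] at hmahler
    exact (Finset.prod_pos fun τ _ => lt_max_of_lt_left (norm_pos_iff.mpr (hτy τ))).ne hmahler
  have hroot : aeval (τ₀ (x / y)) F = 0 := by
    rw [aeval_def, eval₂_eq_eval_map, algebraMap_int_eq, hF, eval_prod]
    refine Finset.prod_eq_zero (Finset.mem_univ τ₀.toRatAlgHom) ?_
    simp [mul_div_cancel₀ _ ((map_ne_zero τ₀).mpr hy0)]
  have hdeg : F.natDegree ≤ Module.finrank ℚ K := by
    rw [← natDegree_map_eq_of_injective (Int.castRingHom ℂ).injective_int, hF,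
      ← AlgHom.card ℚ K ℂ]
    exact natDegree_prod_C_mul_X_sub_C_le _ _ _
  calc naiveHeight (τ₀ (x / y))
      ≤ 2 ^ F.natDegree * (F.map (Int.castRingHom ℂ)).mahlerMeasure :=
        naiveHeight_le_two_pow_natDegree_mul_mahlerMeasure hF0 hroot
    _ ≤ _ := by
      rw [hmahler]
      gcongr
      exact one_le_two

/-- Let `K` be a totally real number field of degree `D` (realized inside `ℝ`), `c > 0`,
`m ≥ 1`. If `p, q ∈ K`, `q > 0`, with `mp, mq` algebraic integers and
`|p| ≥ c|σ(p)|`, `|q| ≥ c|σ(q)|` for all real embeddings `σ`, then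
`H(p/q) ≤ c₂ · max{|p|, q}^D` for a constant `c₂` independent of `p, q`. -/
theorem stmt11 (K : Subfield ℝ) [NumberField K]
    (htotreal : ∀ φ : K →+* ℂ, NumberField.ComplexEmbedding.IsReal φ)
    (D : ℕ) (hD : D = Module.finrank ℚ K)
    (c : ℝ) (hc : 0 < c) (m : ℕ) (hm : 1 ≤ m) :
    ∃ c₂ : ℝ, 0 < c₂ ∧
      ∀ p q : K, 0 < (q : ℝ) →
        IsIntegral ℤ ((m : K) * p) → IsIntegral ℤ ((m : K) * q) →
        (∀ σ : K →+* ℝ, c * |σ p| ≤ |(p : ℝ)|) →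
        (∀ σ : K →+* ℝ, c * |σ q| ≤ |(q : ℝ)|) →
        naiveHeight (((p / q : K) : ℝ) : ℂ) ≤ c₂ * max |(p : ℝ)| (q : ℝ) ^ D := by
  refine ⟨2 ^ D * (m / c) ^ D, by positivity, fun p q hq hmp hmq hp_dom hq_dom => ?_⟩
  set R := max |(p : ℝ)| (q : ℝ)
  have hm0 : (m : K) ≠ 0 := Nat.cast_ne_zero.mpr (Nat.one_le_iff_ne_zero.mp hm)
  have hq0 : q ≠ 0 := fun h => hq.ne' (by simp [h])
  have hdom : ∀ x : K, |(x : ℝ)| ≤ R → (∀ σ : K →+* ℝ, c * |σ x| ≤ |(x : ℝ)|) →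
      ∀ σ : K →+* ℝ, c * |σ (m * x)| ≤ m * R := fun x hxR hx σ => by
    rw [map_mul, map_natCast, abs_mul, Nat.abs_cast, mul_left_comm]
    exact mul_le_mul_of_nonneg_left ((hx σ).trans hxR) (Nat.cast_nonneg m)
  calc naiveHeight (((p / q : K) : ℝ) : ℂ)
      = naiveHeight ((Complex.ofRealHom.comp K.subtype) (m * p / (m * q))) := by
        rw [mul_div_mul_left _ _ hm0]; rfl
    _ ≤ 2 ^ D * ∏ τ : K →ₐ[ℚ] ℂ, max ‖τ (m * q)‖ ‖τ (m * p)‖ :=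
        hD ▸ naiveHeight_div_le_two_pow_finrank_mul_prod _ hmp hmq (mul_ne_zero hm0 hq0)
    _ ≤ 2 ^ D * (m * R / c) ^ D := by
        gcongr
        exact hD ▸ prod_max_norm_le_div_pow_finrank htotreal hc
          (hdom p (le_max_left _ _) hp_dom)
          (hdom q ((abs_of_pos hq).trans_le (le_max_right _ _)) hq_dom)
    _ = 2 ^ D * (m / c) ^ D * R ^ D := by ring
end

section
/- For any nonzero algebraic number α, the naive height and the logarithmic Weil height satisfy log H(α) ≤ deg(α) · (h(α) + log 2), where deg(α) is the degree of α over ℚ. -/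
open Polynomial

/-- The absolute logarithmic Weil height of an algebraic number, via the Mahler measure
of its primitive integer minimal polynomial. -/
noncomputable def logWeilHeight (γ : ℂ) : ℝ :=
  (1 / ((minpoly ℚ γ).natDegree : ℝ)) *
    (Real.log |((intMinpoly γ).leadingCoeff : ℝ)| +
      (((intMinpoly γ).aroots ℂ).map fun z => Real.log (max 1 ‖z‖)).sum)

/-!
Over `ℂ` the primitive integer minimal polynomial `P` of `α` is `a ∏ (X - αᵢ)` over the
conjugates `αᵢ`, so each coefficient is `±a` times an elementary symmetric function of the `αᵢ`,
hence at most `C(d, k) |a| ∏ max(1, |αᵢ|) ≤ 2ᵈ M(P)`, where `M(P) = |a| ∏ max(1, |αᵢ|)` is the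
Mahler measure. Taking logarithms, `log M(P) = d h(α)` gives the claim.
-/

open Real

namespace Polynomial

theorem natDegree_integerNormalization {R K : Type*} [CommRing R] [IsDomain R] [Field K]
    [Algebra R K] [IsFractionRing R K] (p : K[X]) :
    (IsLocalization.integerNormalization (nonZeroDivisors R) p).natDegree = p.natDegree := by
  obtain ⟨b, hb, hmap⟩ := IsLocalization.integerNormalization_spec (nonZeroDivisors R) p
  rw [← natDegree_map_eq_of_injective (IsFractionRing.injective R K), hmap, Algebra.smul_def]
  exact natDegree_C_mul (IsFractionRing.to_map_ne_zero_of_mem_nonZeroDivisors hb)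

theorem norm_coeff_le_two_pow_mul_mapMahlerMeasure {A : Type*} [NormedRing A] {v : A →+* ℂ}
    (hv : Isometry v) (p : A[X]) (n : ℕ) :
    ‖p.coeff n‖ ≤ 2 ^ p.natDegree * p.mapMahlerMeasure v :=
  (p.norm_coeff_le_choose_mul_mapMahlerMeasure v hv n).trans <|
    mul_le_mul_of_nonneg_right (mod_cast Nat.choose_le_two_pow _ _) (p.mapMahlerMeasure_nonneg v)

end Polynomial

theorem intMinpoly_ne_zero (γ : ℂ) : intMinpoly γ ≠ 0 := primPart_ne_zero _

theorem natDegree_intMinpoly (γ : ℂ) : (intMinpoly γ).natDegree = (minpoly ℚ γ).natDegree := by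
  rw [intMinpoly, natDegree_primPart, natDegree_integerNormalization]

theorem logWeilHeight_eq_log_mapMahlerMeasure_div (γ : ℂ) :
    logWeilHeight γ =
      log ((intMinpoly γ).mapMahlerMeasure (Int.castRingHom ℂ)) / (minpoly ℚ γ).natDegree := by
  rw [logWeilHeight, mapMahlerMeasure_eq, ← logMahlerMeasure_eq_log_MahlerMeasure,
    logMahlerMeasure_eq_log_leadingCoeff_add_sum_log_roots,
    leadingCoeff_map_of_injective (RingHom.injective_int _)]
  simp [aroots, posLog_eq_log_max_one, div_eq_inv_mul]

theorem exists_naiveHeight_eq_norm_coeff (γ : ℂ) :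
    ∃ i ∈ (intMinpoly γ).support, naiveHeight γ = ‖(intMinpoly γ).coeff i‖ := by
  obtain ⟨i, hi, hsup⟩ := Finset.exists_mem_eq_sup _ (support_nonempty.2 (intMinpoly_ne_zero γ))
    fun i => ((intMinpoly γ).coeff i).natAbs
  exact ⟨i, hi, by rw [naiveHeight, hsup, Int.norm_eq_abs, Nat.cast_natAbs, Int.cast_abs]⟩

theorem naiveHeight_pos (γ : ℂ) : 0 < naiveHeight γ := by
  obtain ⟨i, hi, h⟩ := exists_naiveHeight_eq_norm_coeff γ
  exact h ▸ norm_pos_iff.2 (mem_support_iff.1 hi)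

theorem naiveHeight_le_two_pow_mul_mapMahlerMeasure (γ : ℂ) :
    naiveHeight γ ≤
      2 ^ (minpoly ℚ γ).natDegree * (intMinpoly γ).mapMahlerMeasure (Int.castRingHom ℂ) := by
  obtain ⟨i, -, h⟩ := exists_naiveHeight_eq_norm_coeff γ
  rw [h, ← natDegree_intMinpoly]
  exact norm_coeff_le_two_pow_mul_mapMahlerMeasure Complex.isometry_intCast _ i

theorem stmt12_general (α : ℂ) (halg : IsAlgebraic ℚ α) :
    Real.log (naiveHeight α) ≤
      ((minpoly ℚ α).natDegree : ℝ) * (logWeilHeight α + Real.log 2) := by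
  set d := (minpoly ℚ α).natDegree
  set M := (intMinpoly α).mapMahlerMeasure (Int.castRingHom ℂ)
  have hd : (d : ℝ) ≠ 0 := mod_cast (minpoly.natDegree_pos halg.isIntegral).ne'
  have hM : 0 < M :=
    mapMahlerMeasure_pos_of_ne_zero _ Complex.isometry_intCast (intMinpoly_ne_zero α)
  calc log (naiveHeight α) ≤ log (2 ^ d * M) :=
        log_le_log (naiveHeight_pos α) (naiveHeight_le_two_pow_mul_mapMahlerMeasure α)
    _ = d * (log M / d + log 2) := by
        rw [log_mul (by positivity) hM.ne', log_pow]
        field_simp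
        ring
    _ = d * (logWeilHeight α + log 2) := by rw [logWeilHeight_eq_log_mapMahlerMeasure_div]

/-- For any nonzero algebraic number `α`,
`log H(α) ≤ deg(α) · (h(α) + log 2)`. -/
theorem stmt12 (α : ℂ) (hα : α ≠ 0) (halg : IsAlgebraic ℚ α) :
    Real.log (naiveHeight α) ≤
      ((minpoly ℚ α).natDegree : ℝ) * (logWeilHeight α + Real.log 2) :=
  stmt12_general α halg
end
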